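/- (Covering by intervals with non-negligible centers.) Let μ be a Radon measure on ℝ and U ⊆ ℝ open. For every r_0 > 0 and every positive integer n there is a sequence of closed intervals [x_j − r_j, x_j + r_j] contained in U with pairwise disjoint interiors such that: r_j ≤ r_0 for all j; μ(⋃_j [x_j − (8n)^{-1} r_j, x_j + (8n)^{-1} r_j]) ≥ (1/16) n^{-1} μ(⋃_j [x_j − r_j, x_j + r_j]); and μ(U \ ⋃_j [x_j − r_j, x_j + r_j]) = 0. -/

import Mathlib

/-!
Put `τ = (8n)⁻¹` and `c = (16n)⁻¹ < τ`. At `μ`-almost every `x`, the inequality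
`c μ(B(x, r)) ≤ μ(B(x, τr))` holds for arbitrarily small `r`. Indeed, where it eventually fails,
iterating gives `μ(B(x, τᵏε)) ≤ cᵏ μ(B(x, ε))`, so `μ(B(x, r)) / r → 0` along `r = τᵏε`
because `c / τ < 1`; by a Vitali covering argument such points form a `μ`-null set.
Besicovitch's covering theorem then covers almost all of `U` by disjoint small closed balls on
which the inequality holds, and summing it over the disjoint family gives the estimate.
-/

open MeasureTheory ENNReal Metric Set Filter Topology NNReal

section Besicovitch

variable {α : Type*} [MetricSpace α] [MeasurableSpace α] [BorelSpace α]
  [SecondCountableTopology α] [HasBesicovitchCovering α]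

theorem Besicovitch.measure_le_of_frequently_closedBall_le (μ ν : Measure α) [SFinite μ]
    [IsLocallyFiniteMeasure ν] {s : Set α}
    (hs : ∀ x ∈ s, ∃ᶠ r in 𝓝[>] 0, μ (closedBall x r) ≤ ν (closedBall x r)) : μ s ≤ ν s :=
  (Besicovitch.vitaliFamily μ).measure_le_of_frequently_le ν Measure.AbsolutelyContinuous.rfl s
    fun x hx => (Besicovitch.tendsto_filterAt μ x).frequently (hs x hx)

theorem Besicovitch.measure_null_of_frequently_closedBall_le_mul (μ ν : Measure α) [SFinite μ]
    [IsLocallyFiniteMeasure ν] {s : Set α}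
    (hs : ∀ x ∈ s, ∀ η : ℝ≥0, 0 < η →
      ∃ᶠ r in 𝓝[>] 0, μ (closedBall x r) ≤ η * ν (closedBall x r)) :
    μ s = 0 := by
  refine measure_null_of_locally_null s fun x _ => ?_
  obtain ⟨u, hu, hνu⟩ := ν.finiteAt_nhds x
  refine ⟨s ∩ u, inter_mem_nhdsWithin s hu,
    nonpos_iff_eq_zero.1 (le_of_forall_pos_le_add fun ε hε _ => ?_)⟩
  obtain ⟨η, hη, hηu⟩ := ENNReal.exists_nnreal_pos_mul_lt hνu.ne (ENNReal.coe_pos.2 hε).ne'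
  calc μ (s ∩ u) ≤ (η • ν) (s ∩ u) :=
        measure_le_of_frequently_closedBall_le μ (η • ν) fun y hy => by
          simpa only [Measure.smul_apply, ENNReal.smul_def, smul_eq_mul] using hs y hy.1 η hη
    _ ≤ η * ν u := by
        rw [Measure.smul_apply, ENNReal.smul_def, smul_eq_mul]
        gcongr
        exact inter_subset_right
    _ ≤ 0 + ε := by rw [zero_add]; exact hηu.le

theorem Besicovitch.exists_disjoint_closedBall_covering_ae_of_frequently (μ : Measure α)
    [SFinite μ] {U : Set α} (hU : IsOpen U) {r₀ : ℝ} (hr₀ : 0 < r₀) (P : α → ℝ → Prop)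
    (hP : ∀ᵐ x ∂μ, x ∈ U → ∃ᶠ r in 𝓝[>] 0, P x r) :
    ∃ (t : Set α) (r : α → ℝ), t.Countable ∧
      (∀ x ∈ t, 0 < r x ∧ r x ≤ r₀ ∧ closedBall x (r x) ⊆ U ∧ P x (r x)) ∧
      μ (U \ ⋃ x ∈ t, closedBall x (r x)) = 0 ∧
      t.PairwiseDisjoint fun x => closedBall x (r x) := by
  set s := {x ∈ U | ∃ᶠ r in 𝓝[>] 0, P x r}
  have hUs : μ (U \ s) = 0 := by
    refine measure_mono_null ?_ (ae_iff.1 hP)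
    intro x hx hPx
    exact hx.2 ⟨hx.1, hPx hx.1⟩
  have hfine : ∀ x ∈ s, ∀ δ > 0,
      ({r | r ≤ r₀ ∧ closedBall x r ⊆ U ∧ P x r} ∩ Ioo 0 δ).Nonempty := by
    intro x hx δ hδ
    have hsmall : ∀ᶠ r in 𝓝[>] (0 : ℝ), r < δ ∧ r ≤ r₀ ∧ closedBall x r ⊆ U := by
      obtain ⟨d, hd, hball⟩ := Metric.isOpen_iff.1 hU x hx.1
      filter_upwards [Ioo_mem_nhdsGT (lt_min hδ (lt_min hr₀ hd))] with r hr
      refine ⟨hr.2.trans_le (min_le_left _ _), hr.2.le.trans ((min_le_right _ _).trans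
        (min_le_left _ _)), (closedBall_subset_ball ?_).trans hball⟩
      exact hr.2.trans_le ((min_le_right _ _).trans (min_le_right _ _))
    obtain ⟨r, hPr, ⟨hrδ, hr₀, hrU⟩, hr⟩ :=
      (hx.2.and_eventually (hsmall.and self_mem_nhdsWithin)).exists
    exact ⟨r, ⟨hr₀, hrU, hPr⟩, hr, hrδ⟩
  obtain ⟨t, r, ht, hts, hr, hcov, hdisj⟩ :=
    Besicovitch.exists_disjoint_closedBall_covering_ae μ _ s hfine (fun _ => 1)
      fun _ _ => one_pos
  refine ⟨t, r, ht, fun x hx => ?_, ?_, hdisj⟩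
  · obtain ⟨⟨hr₀, hrU, hPr⟩, hr0, -⟩ := hr x hx
    exact ⟨hr0, hr₀, hrU, hPr⟩
  · refine measure_mono_null (fun x hx => ?_) (measure_union_null hUs hcov)
    by_cases hxs : x ∈ s
    · exact Or.inr ⟨hxs, hx.2⟩
    · exact Or.inl ⟨hx.1, hxs⟩

end Besicovitch

theorem mul_measure_biUnion_le_of_pairwiseDisjoint {α ι : Type*} [MeasurableSpace α]
    (μ : Measure α) {t : Set ι} (ht : t.Countable) {B b : ι → Set α}
    (hB : t.PairwiseDisjoint B) (hbB : ∀ i ∈ t, b i ⊆ B i) (hb : ∀ i ∈ t, MeasurableSet (b i))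
    {c : ℝ≥0∞} (hc : ∀ i ∈ t, c * μ (B i) ≤ μ (b i)) :
    c * μ (⋃ i ∈ t, B i) ≤ μ (⋃ i ∈ t, b i) :=
  calc c * μ (⋃ i ∈ t, B i) ≤ c * ∑' i : t, μ (B i) := by
        gcongr; exact measure_biUnion_le μ ht B
    _ = ∑' i : t, c * μ (B i) := ENNReal.tsum_mul_left.symm
    _ ≤ ∑' i : t, μ (b i) := ENNReal.tsum_le_tsum fun i => hc i i.2
    _ = μ (⋃ i ∈ t, b i) := (measure_biUnion ht (hB.mono_on hbB) hb).symm

theorem le_pow_mul_of_le_mul {g : ℝ → ℝ≥0∞} {τ ε : ℝ} {c : ℝ≥0∞} (hτ0 : 0 < τ) (hτ1 : τ ≤ 1)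
    (hε : 0 < ε) (hg : ∀ r ∈ Ioc 0 ε, g (τ * r) ≤ c * g r) (k : ℕ) :
    g (τ ^ k * ε) ≤ c ^ k * g ε := by
  induction k with
  | zero => simp
  | succ k ih =>
    have hk : τ ^ k * ε ∈ Ioc 0 ε :=
      ⟨by positivity, mul_le_of_le_one_left hε.le (pow_le_one₀ hτ0.le hτ1)⟩
    calc g (τ ^ (k + 1) * ε) = g (τ * (τ ^ k * ε)) := by ring_nf
      _ ≤ c * g (τ ^ k * ε) := hg _ hk
      _ ≤ c * (c ^ k * g ε) := by gcongr
      _ = c ^ (k + 1) * g ε := by ring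

theorem Real.frequently_measure_closedBall_le_mul_volume (μ : Measure ℝ)
    [IsLocallyFiniteMeasure μ] {τ : ℝ} (hτ0 : 0 < τ) (hτ1 : τ < 1) {c : ℝ≥0∞}
    (hc : c < ENNReal.ofReal τ) {x : ℝ}
    (hx : ∀ᶠ r in 𝓝[>] 0, μ (closedBall x (τ * r)) ≤ c * μ (closedBall x r)) {η : ℝ≥0}
    (hη : 0 < η) : ∃ᶠ r in 𝓝[>] 0, μ (closedBall x r) ≤ η * volume (closedBall x r) := by
  obtain ⟨ε, hε : 0 < ε, hεx⟩ := mem_nhdsGT_iff_exists_Ioc_subset.1 hx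
  set q := c / ENNReal.ofReal τ
  have hq : q < 1 := (ENNReal.div_lt_iff (Or.inl (by simp [hτ0])) (Or.inl ofReal_ne_top)).2 (by rwa [one_mul])
  have hcq : c = q * ENNReal.ofReal τ :=
    (ENNReal.div_mul_cancel (by simp [hτ0]) ofReal_ne_top).symm
  have hrad : Tendsto (fun k : ℕ => τ ^ k * ε) atTop (𝓝[>] 0) :=
    tendsto_nhdsWithin_iff.2 ⟨by simpa using
      (tendsto_pow_atTop_nhds_zero_of_lt_one hτ0.le hτ1).mul_const ε,
      Eventually.of_forall fun k => mem_Ioi.2 (by positivity)⟩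
  have hdecay : Tendsto (fun k : ℕ => q ^ k * μ (closedBall x ε)) atTop (𝓝 0) := by
    simpa using ENNReal.Tendsto.mul_const (ENNReal.tendsto_pow_atTop_nhds_zero_of_lt_one hq)
      (Or.inr measure_closedBall_lt_top.ne)
  have hηε : 0 < (η : ℝ≥0∞) * ENNReal.ofReal (2 * ε) := by
    simp [hη, hε]
  refine hrad.frequently (Eventually.frequently ?_)
  filter_upwards [hdecay.eventually (gt_mem_nhds hηε)] with k hk
  calc μ (closedBall x (τ ^ k * ε)) ≤ c ^ k * μ (closedBall x ε) :=
        le_pow_mul_of_le_mul (g := fun r => μ (closedBall x r)) hτ0 hτ1.le hε hεx k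
    _ = ENNReal.ofReal (τ ^ k) * (q ^ k * μ (closedBall x ε)) := by
        rw [hcq, mul_pow, ofReal_pow hτ0.le]; ring
    _ ≤ ENNReal.ofReal (τ ^ k) * (η * ENNReal.ofReal (2 * ε)) := by gcongr
    _ = η * volume (closedBall x (τ ^ k * ε)) := by
        rw [Real.volume_closedBall, show 2 * (τ ^ k * ε) = τ ^ k * (2 * ε) by ring,
          ofReal_mul (pow_nonneg hτ0.le k)]
        ring

theorem Real.ae_frequently_mul_measure_closedBall_le (μ : Measure ℝ) [IsLocallyFiniteMeasure μ]
    {τ : ℝ} (hτ0 : 0 < τ) (hτ1 : τ < 1) {c : ℝ≥0∞} (hc : c < ENNReal.ofReal τ) :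
    ∀ᵐ x ∂μ, ∃ᶠ r in 𝓝[>] 0, c * μ (closedBall x r) ≤ μ (closedBall x (τ * r)) := by
  simp only [ae_iff, not_frequently, not_le]
  exact Besicovitch.measure_null_of_frequently_closedBall_le_mul μ volume fun x (hx : ∀ᶠ r in 𝓝[>] 0, _ < _) η hη =>
    frequently_measure_closedBall_le_mul_volume μ hτ0 hτ1 hc (hx.mono fun _ hr => hr.le) hη

theorem stmt_7 (μ : Measure ℝ) [IsLocallyFiniteMeasure μ]
    (U : Set ℝ) (hU : IsOpen U) (r₀ : ℝ) (hr₀ : 0 < r₀) (n : ℕ) (hn : 0 < n) :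
    ∃ J : Set (ℝ × ℝ), J.Countable ∧
      (∀ p ∈ J, 0 < p.2 ∧ p.2 ≤ r₀ ∧ Set.Icc (p.1 - p.2) (p.1 + p.2) ⊆ U) ∧
      (J.Pairwise fun p q =>
        Disjoint (Set.Ioo (p.1 - p.2) (p.1 + p.2)) (Set.Ioo (q.1 - q.2) (q.1 + q.2))) ∧
      (1 / 16 : ℝ≥0∞) * (n : ℝ≥0∞)⁻¹ * μ (⋃ p ∈ J, Set.Icc (p.1 - p.2) (p.1 + p.2)) ≤
        μ (⋃ p ∈ J,
          Set.Icc (p.1 - (8 * n : ℝ)⁻¹ * p.2) (p.1 + (8 * n : ℝ)⁻¹ * p.2)) ∧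
      μ (U \ ⋃ p ∈ J, Set.Icc (p.1 - p.2) (p.1 + p.2)) = 0 := by
  have hn1 : (1 : ℝ) ≤ n := Nat.one_le_cast.2 hn
  have hτ0 : 0 < (8 * n : ℝ)⁻¹ := by positivity
  have hτ1 : (8 * n : ℝ)⁻¹ < 1 := inv_lt_one_of_one_lt₀ (by linarith)
  have hc : (1 / 16 : ℝ≥0∞) * (n : ℝ≥0∞)⁻¹ < ENNReal.ofReal (8 * n : ℝ)⁻¹ := by
    rw [ofReal_inv_of_pos (by positivity), ofReal_mul (by norm_num), ofReal_natCast, one_div,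
      ← ENNReal.mul_inv (by simp) (by simp), ENNReal.inv_lt_inv, ofReal_ofNat]
    exact ENNReal.mul_lt_mul_left (by simpa using hn.ne') (natCast_ne_top n) (by norm_num)
  obtain ⟨t, r, ht, hr, hcov, hdisj⟩ :=
    Besicovitch.exists_disjoint_closedBall_covering_ae_of_frequently μ hU hr₀ _
      ((Real.ae_frequently_mul_measure_closedBall_le μ hτ0 hτ1 hc).mono fun _ hx _ => hx)
  have hinj : InjOn (fun x => (x, r x)) t := fun x _ y _ h => congrArg Prod.fst h
  refine ⟨(fun x => (x, r x)) '' t, ht.image _, ?_, ?_, ?_, ?_⟩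
  · rintro _ ⟨x, hx, rfl⟩
    obtain ⟨hr0, hr₀, hrU, -⟩ := hr x hx
    exact ⟨hr0, hr₀, Real.closedBall_eq_Icc ▸ hrU⟩
  · refine (hinj.pairwise_image).2 fun x hx y hy hxy => ?_
    have h : Disjoint (closedBall x (r x)) (closedBall y (r y)) := hdisj hx hy hxy
    rw [Real.closedBall_eq_Icc, Real.closedBall_eq_Icc] at h
    exact h.mono Ioo_subset_Icc_self Ioo_subset_Icc_self
  · simp only [biUnion_image, ← Real.closedBall_eq_Icc]
    exact mul_measure_biUnion_le_of_pairwiseDisjoint μ ht hdisj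
      (fun x hx => closedBall_subset_closedBall
        (mul_le_of_le_one_left (hr x hx).1.le (inv_le_one_of_one_le₀ (by linarith))))
      (fun _ _ => measurableSet_closedBall) fun x hx => (hr x hx).2.2.2
  · simpa only [biUnion_image, ← Real.closedBall_eq_Icc] using hcov
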